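/- Let ω be a non-principal ultrafilter on ℕ and 𝒢 a family of groups. The following are equivalent: (1) 𝒢 is an equationally noetherian family, i.e., for every n and every S ⊆ F_n there is a finite S_0 ⊆ S with V_𝒢(S_0) = V_𝒢(S); (2) for every finitely generated group G and every sequence (φ_i) of homomorphisms from G to members of 𝒢, φ_i factors through the limit map φ_∞ : G → G/ker^ω(φ_i) ω-almost surely; (3) for every such sequence, some φ_i factors through φ_∞. -/

import Mathlib

universe u v

def omegaKernel {G : Type u} [Group G] (ω : Ultrafilter ℕ) {Γ : ℕ → Type v}
    [∀ i, Group (Γ i)] (φ : ∀ i, G →* Γ i) : Subgroup G where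
  carrier := {g | {i | φ i g = 1} ∈ ω}
  one_mem' := by
    simp only [Set.mem_setOf_eq, map_one]
    exact Filter.univ_mem' fun i => trivial
  mul_mem' := by
    intro a b ha hb
    simp only [Set.mem_setOf_eq] at *
    filter_upwards [ha, hb] with i h1 h2
    simp [map_mul, h1, h2]
  inv_mem' := by
    intro a ha
    simp only [Set.mem_setOf_eq] at *
    filter_upwards [ha] with i h1
    simp [h1]

instance omegaKernel_normal {G : Type u} [Group G] (ω : Ultrafilter ℕ) {Γ : ℕ → Type v}
    [∀ i, Group (Γ i)] (φ : ∀ i, G →* Γ i) : (omegaKernel ω φ).Normal := by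
  constructor
  intro a ha g
  simp only [omegaKernel, Subgroup.mem_mk, Set.mem_setOf_eq] at *
  filter_upwards [ha] with i h1
  simp [map_mul, h1]

def VFam {ι : Type v} (Γ : ι → Type u) [∀ i, Group (Γ i)] {n : ℕ}
    (S : Set (FreeGroup (Fin n))) : Set (Σ i, Fin n → Γ i) :=
  {p | ∀ W ∈ S, FreeGroup.lift p.2 W = 1}

def EqNoethFam {ι : Type v} (Γ : ι → Type u) [∀ i, Group (Γ i)] : Prop :=
  ∀ (n : ℕ) (S : Set (FreeGroup (Fin n))),
    ∃ S₀ : Set (FreeGroup (Fin n)), S₀ ⊆ S ∧ S₀.Finite ∧ VFam Γ S₀ = VFam Γ S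

/-!
(1 ⇒ 2): pull the ω-kernel back to a free group `F_n` mapping onto `G`; a finite part `S₀` of it
is killed by `φ_i` for ω-almost every `i`, and since `V(S₀) = V(S)` such a `φ_i` kills the whole
ω-kernel. (3 ⇒ 1): if no finite `S₀ ⊆ S` has `V(S₀) = V(S)`, exhaust `S` by finite sets `S_k` and
pick points `p_k ∈ V(S_k) \ V(S)`. Every word of `S` is killed by all but finitely many `p_k`, hence
lies in the ω-kernel of the sequence of evaluation maps `F_n → Γ`, as ω is non-principal; so a
factorization at index `i` would force `p_i ∈ V(S)`.
-/

universe w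

open Filter

theorem QuotientGroup.exists_comp_mk'_eq_iff {G H : Type*} [Group G] [Group H] (N : Subgroup G)
    [N.Normal] (f : G →* H) : (∃ ψ : G ⧸ N →* H, ψ.comp (QuotientGroup.mk' N) = f) ↔ N ≤ f.ker := by
  constructor
  · rintro ⟨ψ, rfl⟩ g hg
    simp [(QuotientGroup.eq_one_iff g).mpr hg]
  · exact fun h => ⟨QuotientGroup.lift N f h, MonoidHom.ext fun _ => rfl⟩

theorem Group.FG.exists_surjective_freeGroup_fin {G : Type*} [Group G] [Group.FG G] :
    ∃ (n : ℕ) (π : FreeGroup (Fin n) →* G), Function.Surjective π := by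
  obtain ⟨S, hS, π, hπ⟩ := Group.fg_iff_exists_freeGroup_hom_surjective.mp ‹Group.FG G›
  obtain ⟨n, ⟨e⟩⟩ := hS.exists_equiv_fin
  exact ⟨n, π.comp (FreeGroup.freeGroupCongr e).symm.toMonoidHom,
    hπ.comp (FreeGroup.freeGroupCongr e).symm.surjective⟩

theorem Ultrafilter.le_cofinite_of_forall_finite_notMem {α : Type*} {ω : Ultrafilter α}
    (hω : ∀ s : Set α, s.Finite → s ∉ ω) : (ω : Filter α) ≤ cofinite :=
  fun _ hs => Ultrafilter.compl_notMem_iff.mp (hω _ hs)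

section VFam

variable {ι : Type v} {Γ : ι → Type u} [∀ i, Group (Γ i)] {n : ℕ}

theorem mem_VFam_iff {S : Set (FreeGroup (Fin n))} {p : Σ i, Fin n → Γ i} :
    p ∈ VFam Γ S ↔ S ⊆ (FreeGroup.lift p.2).ker :=
  Iff.rfl

theorem VFam_anti {S₀ S : Set (FreeGroup (Fin n))} (h : S₀ ⊆ S) : VFam Γ S ⊆ VFam Γ S₀ :=
  fun _ hp W hW => hp W (h hW)

theorem exists_seq_eventually_lift_eq_one_notMem_VFam {S : Set (FreeGroup (Fin n))}
    (hS : ∀ S₀ ⊆ S, S₀.Finite → VFam Γ S₀ ≠ VFam Γ S) :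
    ∃ p : ℕ → Σ i, Fin n → Γ i,
      (∀ W ∈ S, ∀ᶠ k in atTop, FreeGroup.lift (p k).2 W = 1) ∧ ∀ k, p k ∉ VFam Γ S := by
  obtain ⟨e, he⟩ := exists_surjective_nat (FreeGroup (Fin n))
  have hpoint : ∀ k : ℕ, ∃ p, p ∈ VFam Γ (S ∩ e '' Set.Iic k) ∧ p ∉ VFam Γ S := fun k =>
    Set.not_subset.mp fun hsub => hS _ Set.inter_subset_left
      (((Set.finite_Iic k).image e).inter_of_right S)
      (hsub.antisymm (VFam_anti Set.inter_subset_left))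
  choose p hpS hpS' using hpoint
  refine ⟨p, fun W hW => ?_, hpS'⟩
  obtain ⟨m, rfl⟩ := he W
  filter_upwards [eventually_ge_atTop m] with k hk
  exact hpS k (e m) ⟨hW, m, hk, rfl⟩

end VFam

section OmegaKernel

variable {ι : Type v} {Γ : ι → Type u} [∀ i, Group (Γ i)]

theorem EqNoethFam.eventually_omegaKernel_le_ker (hΓ : EqNoethFam Γ) {G : Type w} [Group G]
    [Group.FG G] (ω : Ultrafilter ℕ) (f : ℕ → ι) (φ : ∀ i, G →* Γ (f i)) :
    ∀ᶠ i in ω, omegaKernel ω φ ≤ (φ i).ker := by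
  obtain ⟨n, π, hπ⟩ := Group.FG.exists_surjective_freeGroup_fin (G := G)
  obtain ⟨S₀, hS₀, hS₀_fin, hV⟩ := hΓ n ((omegaKernel ω φ).comap π)
  filter_upwards [(hS₀_fin.eventually_all (l := (ω : Filter ℕ))).mpr fun W hW => hS₀ hW]
    with i hi
  have hlift : FreeGroup.lift (φ i ∘ π ∘ FreeGroup.of) = (φ i).comp π :=
    FreeGroup.ext_hom _ _ fun _ => by simp
  have hmem : (⟨f i, φ i ∘ π ∘ FreeGroup.of⟩ : Σ j, Fin n → Γ j) ∈ VFam Γ S₀ := by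
    rw [mem_VFam_iff, hlift]
    exact hi
  rw [hV, mem_VFam_iff, hlift] at hmem
  intro g hg
  obtain ⟨W, rfl⟩ := hπ g
  exact hmem hg

theorem eqNoethFam_of_exists_omegaKernel_le_ker {ω : Ultrafilter ℕ}
    (hω : (ω : Filter ℕ) ≤ cofinite)
    (h : ∀ (G : Type w) [Group G] [Group.FG G] (f : ℕ → ι) (φ : ∀ i, G →* Γ (f i)),
      ∃ i, omegaKernel ω φ ≤ (φ i).ker) :
    EqNoethFam Γ := by
  intro n S
  by_contra! hS
  obtain ⟨p, hp_lim, hp⟩ := exists_seq_eventually_lift_eq_one_notMem_VFam hS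
  let π : ULift.{w} (FreeGroup (Fin n)) →* FreeGroup (Fin n) := MulEquiv.ulift.toMonoidHom
  have : Group.FG (ULift.{w} (FreeGroup (Fin n))) :=
    Group.fg_of_surjective (f := (MulEquiv.ulift.symm : FreeGroup (Fin n) ≃* _).toMonoidHom)
      MulEquiv.ulift.symm.surjective
  obtain ⟨i, hi⟩ := h _ (fun k => (p k).1) fun k => (FreeGroup.lift (p k).2).comp π
  refine hp i fun W hW => hi ?_
  exact hω.trans Nat.cofinite_eq_atTop.le (hp_lim W hW)

end OmegaKernel

theorem statement4 {ι : Type v} (Γ : ι → Type u) [∀ i, Group (Γ i)]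
    (ω : Ultrafilter ℕ) (hω : ∀ s : Set ℕ, s.Finite → s ∉ ω) :
    List.TFAE [
      EqNoethFam Γ,
      ∀ (G : Type u) (_ : Group G) (_ : Group.FG G) (f : ℕ → ι) (φ : ∀ i, G →* Γ (f i)),
        {i : ℕ | ∃ ψ : (G ⧸ omegaKernel ω φ) →* Γ (f i),
          ψ.comp (QuotientGroup.mk' (omegaKernel ω φ)) = φ i} ∈ ω,
      ∀ (G : Type u) (_ : Group G) (_ : Group.FG G) (f : ℕ → ι) (φ : ∀ i, G →* Γ (f i)),
        ∃ i : ℕ, ∃ ψ : (G ⧸ omegaKernel ω φ) →* Γ (f i),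
          ψ.comp (QuotientGroup.mk' (omegaKernel ω φ)) = φ i ] := by
  simp only [QuotientGroup.exists_comp_mk'_eq_iff]
  tfae_have 1 → 2 := fun hΓ G _ _ f φ => hΓ.eventually_omegaKernel_le_ker ω f φ
  tfae_have 2 → 3 := fun h G _ hG f φ => nonempty_of_mem (h G _ hG f φ)
  tfae_have 3 → 1 := fun h =>
    eqNoethFam_of_exists_omegaKernel_le_ker (Ultrafilter.le_cofinite_of_forall_finite_notMem hω)
      fun G _ hG f φ => h G _ hG f φ
  tfae_finish
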